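/- Let Γ be an abelian group, E a Γ-graded division ring with E₀ not equal to the field 𝔽₂ of two elements, δ̄ ∈ Γⁿ, and S = Mₙ(E)(δ̄). Then every homogeneous unit A ∈ S_h* can be written as A = C·M, where C belongs to the commutator subgroup [S₀*,S₀*] of the unit group of the degree-0 component S₀, and M is a homogeneous monomial matrix. -/

import Mathlib

/-- The degree-`lam` homogeneous component of the matrix ring `Mₙ(E)(δ̄)` over a
`Γ`-graded ring `E`, with the grading shifted by `δ̄`. -/
def MatrixGrade {Γ E : Type*} [AddCommGroup Γ] [Ring E] (𝒜 : Γ → AddSubgroup E)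
    {ι : Type*} (δ : ι → Γ) (lam : Γ) : Set (Matrix ι ι E) :=
  {A | ∀ i j, A i j ∈ 𝒜 (lam + δ j - δ i)}

/-!
Gaussian elimination by degree-zero row operations. Column by column, a homogeneous unit `B`
has a nonzero, hence invertible, entry `B i j` in a row `i` that is not yet a pivot row.
Left multiplication by `1 + c eᵢᵀ` with `cᵢ = 0`, `cₘ = -Bₘⱼ Bᵢⱼ⁻¹` clears the rest of column `j`
and leaves the columns already cleared alone; as `cₘ` has degree `δᵢ - δₘ`, this matrix lies in
`S₀*`. Once every column is cleared, the product `T` of these matrices makes `T * A` a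
homogeneous monomial matrix, and `A = T⁻¹ * (T * A)`.

Every such `1 + c eᵢᵀ` is a commutator in `S₀*` because `E₀ ≠ 𝔽₂`: for `x ∈ E₀ \ {0, 1}` and
`D = diag(1, …, x⁻¹, …, 1)` (with `x⁻¹` at place `i`), `⁅D, 1 + w eᵢᵀ⁆ = 1 + w (x - 1) eᵢᵀ`,
so `w = c (x - 1)⁻¹` does it.
-/

open Matrix

open DirectSum in
theorem Units.inv_mem_graded {Γ E : Type*} [AddCommGroup Γ] [DecidableEq Γ] [Ring E]
    {𝒜 : Γ → AddSubgroup E} [GradedRing 𝒜] {γ : Γ} (u : Eˣ) (hu : (u : E) ∈ 𝒜 γ) :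
    (↑u⁻¹ : E) ∈ 𝒜 (-γ) := by
  -- the degree `-γ` component of `u⁻¹` is already a right inverse of `u`
  set z : E := (decompose 𝒜 (↑u⁻¹ : E) (-γ) : E)
  have hz : (u : E) * z = 1 := by
    have h := congrArg (fun y => (decompose 𝒜 y (γ + -γ) : E)) u.mul_inv
    simp only [decompose_mul, decompose_of_mem 𝒜 hu, coe_of_mul_apply_add, decompose_one] at h
    rw [add_neg_cancel] at h
    simpa [DirectSum.one_def] using h
  rw [u.inv_eq_of_mul_eq_one_right hz]
  exact SetLike.coe_mem _

def Units.oneAddOfSqZero {R : Type*} [Ring R] (N : R) (hN : N * N = 0) : Rˣ where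
  val := 1 + N
  inv := 1 - N
  val_inv := by simp [mul_sub, add_mul, hN]
  inv_val := by simp [sub_mul, mul_add, hN]

open scoped commutatorElement in
theorem Units.commutatorElement_oneAddOfSqZero {R : Type*} [Ring R] (D : Rˣ) {N N' : R}
    (hN : N * N = 0) (hconj : ↑D * N * ↑D⁻¹ = N') (hN' : N' * N = 0) :
    ((⁅D, oneAddOfSqZero N hN⁆ : Rˣ) : R) = 1 + (N' - N) := by
  have hconj' : (D : R) * (1 + N) * ↑D⁻¹ = 1 + N' := by
    rw [mul_add, mul_one, add_mul, D.mul_inv, hconj]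
  rw [commutatorElement_def, Units.val_mul, Units.val_mul, Units.val_mul]
  change (D : R) * (1 + N) * ↑D⁻¹ * (1 - N) = _
  rw [hconj', add_mul, one_mul, mul_sub, mul_one, hN']
  abel

namespace Matrix

variable {ι R : Type*} [Fintype ι] [DecidableEq ι]

section Semiring

variable [Semiring R]

theorem updateCol_zero_mul_apply (i : ι) (a : ι → R) (B : Matrix ι ι R) (m l : ι) :
    (updateCol 0 i a * B) m l = a m * B i l := by
  simp [mul_apply, updateCol_apply]

theorem updateCol_zero_mul_updateCol_zero {i : ι} (a : ι → R) {b : ι → R} (hb : b i = 0) :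
    updateCol (0 : Matrix ι ι R) i a * updateCol 0 i b = 0 := by
  ext m l
  rw [updateCol_zero_mul_apply]
  simp [updateCol_apply, hb]

theorem diagonal_mul_updateCol_zero_mul_diagonal (d d' : ι → R) (i : ι) (a : ι → R) :
    diagonal d * updateCol 0 i a * diagonal d' = updateCol 0 i (fun k => d k * a k * d' i) := by
  ext m l
  rw [mul_diagonal, diagonal_mul]
  rcases eq_or_ne l i with rfl | hl <;> simp [*]

def diagonalUnits (d : ι → Rˣ) : (Matrix ι ι R)ˣ where
  val := diagonal fun k => d k
  inv := diagonal fun k => ↑(d k)⁻¹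
  val_inv := by simp [diagonal_mul_diagonal]
  inv_val := by simp [diagonal_mul_diagonal]

def IsMonomialCol (B : Matrix ι ι R) (i j : ι) : Prop :=
  IsUnit (B i j) ∧ ∀ m, m ≠ i → B m j = 0

theorem exists_ne_zero_notMem_image_of_isMonomialCol [Nontrivial R] (B : (Matrix ι ι R)ˣ)
    {s : Set ι} {ρ : ι → ι} (hs : ∀ j ∈ s, IsMonomialCol (B : Matrix ι ι R) (ρ j) j)
    {j : ι} (hj : j ∉ s) : ∃ i ∉ ρ '' s, (B : Matrix ι ι R) i j ≠ 0 := by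
  -- otherwise row `j` of `B⁻¹` vanishes on `ρ '' s` and column `j` of `B` off it
  by_contra! h
  have hrow : ∀ j' ∈ s, ((B⁻¹ : (Matrix ι ι R)ˣ) : Matrix ι ι R) j (ρ j') = 0 := by
    intro j' hj'
    have h0 : (((B⁻¹ : (Matrix ι ι R)ˣ) : Matrix ι ι R) * B) j j' = 0 := by
      rw [B.inv_mul, one_apply_ne (ne_of_mem_of_not_mem hj' hj).symm]
    rwa [mul_apply, Finset.sum_eq_single (ρ j')
      (fun m _ hm => by rw [(hs j' hj').2 m hm, mul_zero]) (by simp),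
      (hs j' hj').1.mul_left_eq_zero] at h0
  have h1 : (((B⁻¹ : (Matrix ι ι R)ˣ) : Matrix ι ι R) * B) j j = 0 := by
    rw [mul_apply]
    refine Finset.sum_eq_zero fun m _ => ?_
    by_cases hm : m ∈ ρ '' s
    · obtain ⟨j', hj', rfl⟩ := hm
      rw [hrow j' hj', zero_mul]
    · rw [h m hm, mul_zero]
  rw [B.inv_mul, one_apply_eq] at h1
  exact one_ne_zero h1

theorem eq_diagonal_mul_permMatrix_of_isMonomialCol {M : Matrix ι ι R} {σ : Equiv.Perm ι}
    (h : ∀ j, ∀ m, m ≠ σ j → M m j = 0) :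
    M = diagonal (fun i => M i (σ⁻¹ i)) * (σ⁻¹).permMatrix R := by
  ext m l
  rw [diagonal_mul, Equiv.Perm.permMatrix, PEquiv.toMatrix_apply, Equiv.toPEquiv_apply]
  by_cases hl : σ⁻¹ m = l
  · simp [hl]
  · rw [if_neg (by simpa using hl), mul_zero]
    exact h l m fun hm => hl (by simp [hm])

end Semiring

variable [Ring R]

def colTransvection (i : ι) (c : ι → R) (hc : c i = 0) : (Matrix ι ι R)ˣ :=
  Units.oneAddOfSqZero (updateCol 0 i c) (updateCol_zero_mul_updateCol_zero c hc)

theorem colTransvection_mul_apply {i : ι} {c : ι → R} (hc : c i = 0) (B : Matrix ι ι R)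
    (m l : ι) : ((colTransvection i c hc : Matrix ι ι R) * B) m l = B m l + c m * B i l := by
  simp [colTransvection, Units.oneAddOfSqZero, add_mul, updateCol_zero_mul_apply]

end Matrix

namespace MatrixGrade

variable {Γ E ι : Type*} [AddCommGroup Γ] [Ring E] {𝒜 : Γ → AddSubgroup E} {δ : ι → Γ}

theorem mul_mem [Fintype ι] [SetLike.GradedMul 𝒜] {μ ν : Γ} {X Y : Matrix ι ι E}
    (hX : X ∈ MatrixGrade 𝒜 δ μ) (hY : Y ∈ MatrixGrade 𝒜 δ ν) :
    X * Y ∈ MatrixGrade 𝒜 δ (μ + ν) := fun i j =>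
  AddSubgroup.sum_mem _ fun k _ => by
    convert SetLike.mul_mem_graded (hX i k) (hY k j) using 2
    abel

theorem diagonal_mem [DecidableEq ι] {d : ι → E} (hd : ∀ k, d k ∈ 𝒜 0) :
    diagonal d ∈ MatrixGrade 𝒜 δ 0 := by
  intro i j
  rcases eq_or_ne i j with rfl | hij
  · simpa using hd i
  · simp [hij]

theorem updateCol_zero_mem [DecidableEq ι] {i : ι} {c : ι → E}
    (hc : ∀ k, c k ∈ 𝒜 (δ i - δ k)) : updateCol 0 i c ∈ MatrixGrade 𝒜 δ 0 := by
  intro k l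
  rcases eq_or_ne l i with rfl | hl
  · simpa using hc k
  · simp [hl]

section GradedMonoid

variable [Fintype ι] [DecidableEq ι] [SetLike.GradedMonoid 𝒜]

variable (𝒜 δ) in
def zeroSubmonoid : Submonoid (Matrix ι ι E) where
  carrier := MatrixGrade 𝒜 δ 0
  mul_mem' hX hY := by simpa using mul_mem hX hY
  one_mem' := diagonal_mem fun _ => SetLike.one_mem_graded 𝒜

theorem units_mul_mem {T : (Matrix ι ι E)ˣ} (hT : T ∈ (zeroSubmonoid 𝒜 δ).units) {lam : Γ}
    {B : Matrix ι ι E} (hB : B ∈ MatrixGrade 𝒜 δ lam) :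
    (T : Matrix ι ι E) * B ∈ MatrixGrade 𝒜 δ lam := by
  simpa using mul_mem ((Submonoid.mem_units_iff _ _).1 hT).1 hB

theorem colTransvection_mem_units {i : ι} {c : ι → E} (hc : c i = 0)
    (hcg : ∀ k, c k ∈ 𝒜 (δ i - δ k)) : colTransvection i c hc ∈ (zeroSubmonoid 𝒜 δ).units := by
  have hN := updateCol_zero_mem hcg
  have h1 := (zeroSubmonoid 𝒜 δ).one_mem
  exact (Submonoid.mem_units_iff _ _).2
    ⟨fun k l => add_mem (h1 k l) (hN k l), fun k l => sub_mem (h1 k l) (hN k l)⟩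

end GradedMonoid

variable [DecidableEq Γ] [GradedRing 𝒜] [Fintype ι] [DecidableEq ι]

theorem diagonalUnits_mem_units {d : ι → Eˣ} (hd : ∀ k, (d k : E) ∈ 𝒜 0) :
    diagonalUnits d ∈ (zeroSubmonoid 𝒜 δ).units := by
  have hd' : ∀ k, (↑(d k)⁻¹ : E) ∈ 𝒜 0 := fun k => by simpa using (d k).inv_mem_graded (hd k)
  exact (Submonoid.mem_units_iff _ _).2 ⟨diagonal_mem hd, diagonal_mem hd'⟩

open scoped commutatorElement in
theorem colTransvection_mem_commutator
    (hdiv : ∀ (γ : Γ) (x : E), x ∈ 𝒜 γ → x ≠ 0 → IsUnit x)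
    (hE0 : ∃ x : E, x ∈ 𝒜 (0 : Γ) ∧ x ≠ 0 ∧ x ≠ 1)
    {i : ι} {c : ι → E} (hc : c i = 0) (hcg : ∀ k, c k ∈ 𝒜 (δ i - δ k)) :
    colTransvection i c hc ∈ ⁅(zeroSubmonoid 𝒜 δ).units, (zeroSubmonoid 𝒜 δ).units⁆ := by
  obtain ⟨x, hx0, hx, hx1⟩ := hE0
  set u := (hdiv 0 x hx0 hx).unit
  have hx1' : x - 1 ∈ 𝒜 0 := sub_mem hx0 (SetLike.one_mem_graded 𝒜)
  set v := (hdiv 0 _ hx1' (sub_ne_zero.mpr hx1)).unit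
  set w : ι → E := fun k => c k * ↑v⁻¹
  have hw : w i = 0 := by simp [w, hc]
  have hwg : ∀ k, w k ∈ 𝒜 (δ i - δ k) := fun k => by
    simpa using SetLike.mul_mem_graded (hcg k) (v.inv_mem_graded hx1')
  set D := diagonalUnits (Pi.mulSingle i u⁻¹)
  have hD : D ∈ (zeroSubmonoid 𝒜 δ).units := diagonalUnits_mem_units fun k => by
    rcases eq_or_ne k i with rfl | hk
    · simpa using u.inv_mem_graded hx0
    · simpa [hk] using SetLike.one_mem_graded 𝒜
  have hconj : (D : Matrix ι ι E) * updateCol 0 i w * (↑D⁻¹ : Matrix ι ι E) =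
      updateCol 0 i fun k => w k * x := by
    change diagonal _ * _ * diagonal _ = _
    rw [diagonal_mul_updateCol_zero_mul_diagonal]
    congr 1
    funext k
    rcases eq_or_ne k i with rfl | hk
    · simp [hw]
    · simp [hk, u]
  have hcomm : ⁅D, colTransvection i w hw⁆ = colTransvection i c hc := Units.ext <| by
    rw [colTransvection, Units.commutatorElement_oneAddOfSqZero D _ hconj
      (updateCol_zero_mul_updateCol_zero _ hw)]
    have hv : (↑v⁻¹ : E) * (x - 1) = 1 := by simp [v]
    change 1 + _ = 1 + _
    congr 1
    ext m l
    rcases eq_or_ne l i with rfl | hl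
    · simp only [Matrix.sub_apply, updateCol_self, w, mul_assoc, ← mul_sub, ← mul_sub_one, hv,
        mul_one]
    · simp [hl]
  exact hcomm ▸ Subgroup.commutator_mem_commutator hD (colTransvection_mem_units hw hwg)

theorem exists_commutator_mul_isMonomialCol
    (hdiv : ∀ (γ : Γ) (x : E), x ∈ 𝒜 γ → x ≠ 0 → IsUnit x)
    (hE0 : ∃ x : E, x ∈ 𝒜 (0 : Γ) ∧ x ≠ 0 ∧ x ≠ 1)
    {lam : Γ} {B : Matrix ι ι E} (hB : B ∈ MatrixGrade 𝒜 δ lam) {i j : ι} (hij : B i j ≠ 0) :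
    ∃ T ∈ ⁅(zeroSubmonoid 𝒜 δ).units, (zeroSubmonoid 𝒜 δ).units⁆,
      IsMonomialCol ((T : Matrix ι ι E) * B) i j ∧
        ∀ l, B i l = 0 → ∀ m, ((T : Matrix ι ι E) * B) m l = B m l := by
  set u := (hdiv _ _ (hB i j) hij).unit
  set c : ι → E := fun m => if m = i then 0 else -(B m j * ↑u⁻¹)
  have hc : c i = 0 := if_pos rfl
  have hcg : ∀ m, c m ∈ 𝒜 (δ i - δ m) := fun m => by
    by_cases hm : m = i
    · simp [c, hm]
    · simp only [c, if_neg hm]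
      refine neg_mem ?_
      convert SetLike.mul_mem_graded (hB m j) (u.inv_mem_graded (hB i j)) using 2
      abel
  refine ⟨colTransvection i c hc, colTransvection_mem_commutator hdiv hE0 hc hcg, ⟨?_, ?_⟩, ?_⟩
  · simpa [colTransvection_mul_apply, hc] using hdiv _ _ (hB i j) hij
  · intro m hm
    simp [colTransvection_mul_apply, c, hm, mul_assoc, u]
  · intro l hl m
    simp [colTransvection_mul_apply, hl]

theorem exists_commutator_mul_forall_isMonomialCol [Nontrivial E]
    (hdiv : ∀ (γ : Γ) (x : E), x ∈ 𝒜 γ → x ≠ 0 → IsUnit x)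
    (hE0 : ∃ x : E, x ∈ 𝒜 (0 : Γ) ∧ x ≠ 0 ∧ x ≠ 1) {lam : Γ} (t : Finset ι) :
    ∀ (B : (Matrix ι ι E)ˣ) (ρ : ι → ι), (B : Matrix ι ι E) ∈ MatrixGrade 𝒜 δ lam →
      Set.InjOn ρ (↑t)ᶜ → (∀ j ∉ t, IsMonomialCol (B : Matrix ι ι E) (ρ j) j) →
      ∃ T ∈ ⁅(zeroSubmonoid 𝒜 δ).units, (zeroSubmonoid 𝒜 δ).units⁆, ∃ ρ' : ι → ι,
        Function.Injective ρ' ∧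
          ∀ j, IsMonomialCol ((T * B : (Matrix ι ι E)ˣ) : Matrix ι ι E) (ρ' j) j := by
  induction t using Finset.induction_on with
  | empty =>
    intro B ρ _ hρ hcol
    exact ⟨1, one_mem _, ρ, Set.injOn_univ.1 (by simpa using hρ), by simpa using hcol⟩
  | insert j t hjt ih =>
    intro B ρ hB hρ hcol
    set s : Set ι := (↑(insert j t))ᶜ
    have hjs : j ∉ s := by simp [s]
    obtain ⟨i, his, hij⟩ := exists_ne_zero_notMem_image_of_isMonomialCol B (s := s) hcol hjs
    obtain ⟨T, hT, hTj, hTcol⟩ := exists_commutator_mul_isMonomialCol hdiv hE0 hB hij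
    have hρs : Set.EqOn ρ (Function.update ρ j i) s := fun k hk =>
      (Function.update_of_ne (ne_of_mem_of_not_mem hk hjs) _ _).symm
    have hts : ((↑t)ᶜ : Set ι) = insert j s := by
      ext k; by_cases hk : k = j <;> simp [s, hk, hjt]
    obtain ⟨T', hT', ρ', hρ', hcol'⟩ := ih (T * B) (Function.update ρ j i)
      (units_mul_mem (Subgroup.commutator_le_self _ hT) hB)
      (by
        rw [hts, Set.injOn_insert hjs, ← hρs.image_eq]
        exact ⟨hρ.congr hρs, by simpa using his⟩)
      (by
        intro k hk
        by_cases hkj : k = j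
        · subst hkj
          simpa using hTj
        · have hks : k ∈ s := by simp [s, hk, hkj]
          have hi : (B : Matrix ι ι E) i k = 0 :=
            (hcol k (by simpa [s] using hks)).2 i fun h => his ⟨k, hks, h.symm⟩
          rw [Function.update_of_ne hkj]
          simpa [IsMonomialCol, hTcol k hi] using hcol k (by simpa [s] using hks))
    exact ⟨T' * T, Subgroup.mul_mem _ hT' hT, ρ', hρ', by simpa [mul_assoc] using hcol'⟩

end MatrixGrade

open MatrixGrade in
/-- if `E` is a `Γ`-graded division ring with `E₀ ≠ 𝔽₂` and
`S = Mₙ(E)(δ̄)`, then every homogeneous unit `A ∈ S_h*` can be written `A = C * M`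
with `C ∈ [S₀*, S₀*]` (the commutator subgroup of the unit group of the degree-zero
component `S₀`) and `M` a homogeneous monomial matrix. -/
theorem homogeneous_unit_factorization {Γ E : Type*} [AddCommGroup Γ] [DecidableEq Γ]
    [Ring E] [Nontrivial E] (𝒜 : Γ → AddSubgroup E) [GradedRing 𝒜]
    (hdiv : ∀ (γ : Γ) (x : E), x ∈ 𝒜 γ → x ≠ 0 → IsUnit x)
    -- `E₀` is not the field with two elements
    (hE0 : ∃ x : E, x ∈ 𝒜 (0 : Γ) ∧ x ≠ 0 ∧ x ≠ 1)
    {n : ℕ} (δ : Fin n → Γ)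
    -- the group of units of the degree-zero component `S₀`
    (S0u : Subgroup (Matrix (Fin n) (Fin n) E)ˣ)
    (hS0u : ∀ A : (Matrix (Fin n) (Fin n) E)ˣ, A ∈ S0u ↔
      (A.val ∈ MatrixGrade 𝒜 δ 0 ∧ A⁻¹.val ∈ MatrixGrade 𝒜 δ 0))
    (A : (Matrix (Fin n) (Fin n) E)ˣ)
    -- `A` is a homogeneous unit
    (hA : ∃ lam, A.val ∈ MatrixGrade 𝒜 δ lam) :
    ∃ C M : (Matrix (Fin n) (Fin n) E)ˣ,
      C ∈ ⁅S0u, S0u⁆ ∧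
      (∃ (u : Fin n → E) (π : Equiv.Perm (Fin n)), (∀ i, IsUnit (u i)) ∧
        M.val = Matrix.diagonal u * π.permMatrix E) ∧
      (∃ lam, M.val ∈ MatrixGrade 𝒜 δ lam) ∧
      A = C * M := by
  obtain ⟨lam, hA⟩ := hA
  obtain rfl : S0u = (zeroSubmonoid 𝒜 δ).units := by
    ext B
    rw [hS0u, Submonoid.mem_units_iff]
    rfl
  obtain ⟨T, hT, ρ, hρ, hcol⟩ :=
    exists_commutator_mul_forall_isMonomialCol hdiv hE0 Finset.univ A id hA (by simp) (by simp)
  set σ := Equiv.ofBijective ρ (Finite.injective_iff_bijective.1 hρ)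
  refine ⟨T⁻¹, T * A, inv_mem hT, ⟨_, σ⁻¹, fun i => ?_,
    eq_diagonal_mul_permMatrix_of_isMonomialCol (σ := σ) fun j => (hcol j).2⟩,
    ⟨lam, units_mul_mem (Subgroup.commutator_le_self _ hT) hA⟩, by group⟩
  simpa [σ, Equiv.ofBijective_apply_symm_apply] using (hcol (σ⁻¹ i)).1
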